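/- arXiv:1609.02702 — 2 statements merged into one kernel-verified Lean document; each statement's English description precedes it below -/
import Mathlib

section
/- Suppose r, r₁, r₂, r₁₂, r₁₁ ∈ ℝ³ satisfy r₁₂ = a·r + b·(r₁−r) + c·(r₂−r) and r₁₁ − r₁ = α·(r₁−r) + β·(r₁₂−r₁). Then det[r₁−r, r₂−r, r₁₁−r] = (a−1)·β·det[r, r₁, r₂]. -/
/-- Determinant of the 3×3 matrix with columns `u`, `v`, `w`. -/
def det3 (u v w : Fin 3 → ℝ) : ℝ :=
  Matrix.det (Matrix.of fun i j => ![u, v, w] j i)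

theorem det_r11_formula (r r1 r2 r12 r11 : Fin 3 → ℝ) (a b c α β : ℝ)
    (h12 : r12 = a • r + b • (r1 - r) + c • (r2 - r))
    (h11 : r11 - r1 = α • (r1 - r) + β • (r12 - r1)) :
    det3 (r1 - r) (r2 - r) (r11 - r) = ((a - 1) * β) * det3 r r1 r2 := by
  have h11' : r11 = r1 + α • (r1 - r) + β • (r12 - r1) := by
    have := h11; linear_combination (norm := module) this
  subst h12 h11'
  simp only [det3, Matrix.det_fin_three, Matrix.of_apply, Matrix.cons_val', Matrix.cons_val_zero,
    Matrix.cons_val_one, Matrix.head_cons, Matrix.head_fin_const, Matrix.cons_val_fin_one,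
    Matrix.empty_val', Pi.add_apply, Pi.sub_apply, Pi.smul_apply, smul_eq_mul,
    Matrix.cons_val_two, Matrix.tail_cons]
  ring
end

section
/- Let r : ℤ² → ℝ³ satisfy the constant-coefficient structure equations with a = −3, b = c = α = γ = −1, β = δ = 0 (so r₁₁ = r, r₂₂ = r, r₁₂ = −r − r₁ − r₂). Then the combinatorial Laplacian satisfies Δr = 8r, where (Δr)(i,j) = 6r(i,j) − r(i−1,j) − r(i−1,j+1) − r(i,j−1) − r(i,j+1) − r(i+1,j−1) − r(i+1,j). -/
/-- Combinatorial Laplacian on the triangulated lattice. -/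
def discLap (f : ℤ → ℤ → Fin 3 → ℝ) (i j : ℤ) : Fin 3 → ℝ :=
  (6 : ℝ) • f i j - f (i-1) j - f (i-1) (j+1) - f i (j-1) - f i (j+1)
    - f (i+1) (j-1) - f (i+1) j

theorem affine_sphere_laplacian_eigen (r : ℤ → ℤ → Fin 3 → ℝ)
    (h11 : ∀ i j : ℤ, r (i+2) j = r i j)
    (h22 : ∀ i j : ℤ, r i (j+2) = r i j)
    (h12 : ∀ i j : ℤ, r (i+1) (j+1) = -r i j - r (i+1) j - r i (j+1)) :
    ∀ i j : ℤ, discLap r i j = (8 : ℝ) • r i j := by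
  intro i j
  have e1 : i - 1 + 2 = i + 1 := by ring
  have e2 : j - 1 + 2 = j + 1 := by ring
  have a1 : r (i-1) j = r (i+1) j := by rw [← h11 (i-1) j, e1]
  have a2 : r (i-1) (j+1) = r (i+1) (j+1) := by rw [← h11 (i-1) (j+1), e1]
  have a3 : r i (j-1) = r i (j+1) := by rw [← h22 i (j-1), e2]
  have a4 : r (i+1) (j-1) = r (i+1) (j+1) := by rw [← h22 (i+1) (j-1), e2]
  unfold discLap
  rw [a1, a2, a3, a4, h12 i j]
  funext k
  simp [Pi.smul_apply, Pi.sub_apply, Pi.neg_apply, Pi.add_apply, smul_eq_mul]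
  ring
end
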